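/- Let X be a normed space, F a nonempty closed bounded convex subset with F ≠ {0}, and f: X → (-∞,∞] center-Lipschitz on dom f at x̄ with constant ℓ, 0 ≤ ℓ < ‖F‖^{-1}. Define the perturbed minimal time function T(x) = inf{ρ_F(y − x) + f(y) : y ∈ X}, where ρ_F is the Minkowski gauge of F, and assume x̄ ∈ dom T with T(x̄) = f(x̄). Then ∂̂T(x̄) = ∂̂f(x̄) ∩ {x* ∈ X* : sup_{u∈F} ⟨−x*, u⟩ ≤ 1}. -/

import Mathlib

noncomputable section
open Filter Topology

variable {X : Type*} [NormedAddCommGroup X] [NormedSpace ℝ X]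

/-- ε-Fréchet subdifferential of g : X → EReal at x₀, as a set of continuous linear functionals. -/
def eFrechetSub (ε : ℝ) (g : X → EReal) (x₀ : X) : Set (X →L[ℝ] ℝ) :=
  {p | (-(ε : EReal)) ≤ liminf (fun x =>
      (g x - g x₀ - ((p (x - x₀) : ℝ) : EReal)) * ((‖x - x₀‖⁻¹ : ℝ) : EReal)) (𝓝[≠] x₀)}

/-- s-Hölder subdifferential of g at x₀. -/
def holderSub (s : ℝ) (g : X → EReal) (x₀ : X) : Set (X →L[ℝ] ℝ) :=
  {p | (⊥ : EReal) < liminf (fun x =>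
      (g x - g x₀ - ((p (x - x₀) : ℝ) : EReal)) * (((‖x - x₀‖ ^ (1 + s))⁻¹ : ℝ) : EReal)) (𝓝[≠] x₀)}

/-- Infimal convolution T(x) = inf_y (φ(y - x) + f(y)). -/
def infConv (φ f : X → EReal) : X → EReal := fun x => ⨅ y, (φ (y - x) + f y)

/-- Minkowski gauge ρ_F(x) = inf {t ≥ 0 : x ∈ tF}, with inf ∅ = +∞. -/
def gauge' (F : Set X) : X → EReal := fun x =>
  sInf {r : EReal | ∃ t : ℝ, 0 ≤ t ∧ (∃ u ∈ F, x = t • u) ∧ r = (t : EReal)}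

open Classical in
def eIndicator (Ω : Set X) : X → EReal := fun x => if x ∈ Ω then (0 : EReal) else ⊤

/-- Convexity for extended-real-valued functions. -/
def ERealConvexOn (g : X → EReal) : Prop :=
  ∀ x y : X, ∀ t : ℝ, 0 ≤ t → t ≤ 1 →
    g (t • x + (1 - t) • y) ≤ ((t : ℝ) : EReal) * g x + (((1 - t : ℝ)) : EReal) * g y

/-
Write `T` for the infimal convolution of `ρ_F` and `f`, and `a = f x₀ = T x₀`. Since
`ρ_F 0 = 0`, `T ≤ f` with equality at `x₀`, so Fréchet subgradients of `T` are subgradients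
of `f`; moreover `T (x₀ - t u) ≤ ρ_F (t u) + f x₀ ≤ a + t` for `u ∈ F`, which forces `-p u ≤ 1`.

Conversely, `-p ≤ 1` on `F` gives `p (x - y) ≤ ρ_F (y - x)`. In `T x = inf_y ρ_F (y - x) + f y`,
points `y` within a fixed multiple of `‖x - x₀‖` from `x₀` are handled by the subgradient
inequality of `f` at `y`, and far-away points by `ρ_F z ≥ ‖z‖ / ‖F‖`, the center-Lipschitz bound
`f y ≥ a - ℓ ‖y - x₀‖`, and `ℓ ‖F‖ < 1`.
-/

lemma EReal.zero_le_liminf_iff {α : Type*} {u : α → EReal} {l : Filter α} :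
    0 ≤ liminf u l ↔ ∀ ε : ℝ, 0 < ε → ∀ᶠ x in l, ((-ε : ℝ) : EReal) ≤ u x := by
  rw [le_liminf_iff']
  refine ⟨fun h ε hε => h _ (by exact_mod_cast neg_neg_of_pos hε), fun h y hy => ?_⟩
  obtain ⟨r, hyr, hr⟩ := EReal.lt_iff_exists_real_btwn.1 hy
  exact (h (-r) (by exact_mod_cast neg_pos.2 (EReal.coe_lt_coe_iff.1 hr))).mono
    fun x hx => hyr.le.trans (by simpa using hx)

lemma EReal.neg_le_sub_sub_mul_inv_iff {r : ℝ} (hr : 0 < r) (a c ε : ℝ) (v : EReal) :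
    ((-ε : ℝ) : EReal) ≤ (v - a - c) * ((r⁻¹ : ℝ) : EReal) ↔
      ((a + c - ε * r : ℝ) : EReal) ≤ v := by
  induction v with
  | bot => simpa [EReal.bot_mul_of_pos (EReal.coe_pos.2 (inv_pos.2 hr))]
      using EReal.coe_ne_bot (a + c - ε * r)
  | top => simp [EReal.top_mul_of_pos (EReal.coe_pos.2 (inv_pos.2 hr))]
  | coe b =>
    norm_cast
    rw [← div_eq_mul_inv, le_div_iff₀ hr]
    constructor <;> intro h <;> linarith

section NormedGroup

variable {E : Type*} [NormedAddCommGroup E]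

theorem sSup_image_norm_nonneg (F : Set E) : 0 ≤ sSup ((fun u => ‖u‖) '' F) :=
  Real.sSup_nonneg (by rintro _ ⟨v, -, rfl⟩; exact norm_nonneg v)

theorem inv_sSup_norm_mul_norm_le_one {F : Set E} (hbd : Bornology.IsBounded F) {u : E}
    (hu : u ∈ F) :
    (sSup ((fun u => ‖u‖) '' F))⁻¹ * ‖u‖ ≤ 1 := by
  obtain ⟨C, hC⟩ := isBounded_iff_forall_norm_le.1 hbd
  have hbdd : BddAbove ((fun u => ‖u‖) '' F) := ⟨C, by rintro _ ⟨v, hv, rfl⟩; exact hC v hv⟩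
  exact inv_mul_le_one_of_le₀ (le_csSup hbdd ⟨u, hu, rfl⟩) (sSup_image_norm_nonneg F)

theorem infConv_le (φ f : E → EReal) (x y : E) : infConv φ f x ≤ φ (y - x) + f y :=
  iInf_le (fun y => φ (y - x) + f y) y

theorem le_infConv {φ f : E → EReal} {x : E} {r : EReal} (h : ∀ y, r ≤ φ (y - x) + f y) :
    r ≤ infConv φ f x :=
  le_iInf h

theorem infConv_le_self {φ : E → EReal} (hφ : φ 0 = 0) (f : E → EReal) (x : E) :
    infConv φ f x ≤ f x := by
  simpa [hφ] using infConv_le φ f x x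

theorem coe_sub_le_of_center_lipschitz {f : E → EReal} {x₀ : E} {a ℓ : ℝ}
    (hfbot : ∀ x, f x ≠ ⊥) (ha : f x₀ = a)
    (hlip : ∀ x : E, f x ≠ ⊤ → |(f x).toReal - (f x₀).toReal| ≤ ℓ * ‖x - x₀‖) (y : E) :
    ((a - ℓ * ‖y - x₀‖ : ℝ) : EReal) ≤ f y := by
  rcases eq_or_ne (f y) ⊤ with hy | hy
  · simp [hy]
  have hdist := hlip y hy
  rw [ha, EReal.toReal_coe] at hdist
  rw [← EReal.coe_toReal hy (hfbot y), EReal.coe_le_coe_iff]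
  linarith [neg_abs_le ((f y).toReal - a)]

end NormedGroup

theorem mem_eFrechetSub_zero_iff {g : X → EReal} {x₀ : X} {a : ℝ} (ha : g x₀ = a)
    {p : X →L[ℝ] ℝ} :
    p ∈ eFrechetSub 0 g x₀ ↔
      ∀ ε : ℝ, 0 < ε → ∀ᶠ x in 𝓝 x₀, ((a + p (x - x₀) - ε * ‖x - x₀‖ : ℝ) : EReal) ≤ g x := by
  simp only [eFrechetSub, Set.mem_ofPred_eq, EReal.coe_zero, neg_zero, ha,
    EReal.zero_le_liminf_iff, eventually_nhdsWithin_iff]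
  refine forall₂_congr fun ε _ => eventually_congr (Eventually.of_forall fun x => ?_)
  rcases eq_or_ne x x₀ with rfl | hx
  · simp [ha]
  · have hr : 0 < ‖x - x₀‖ := norm_pos_iff.2 (sub_ne_zero.2 hx)
    simp only [Set.mem_compl_iff, Set.mem_singleton_iff, hx, not_false_eq_true, forall_const,
      EReal.neg_le_sub_sub_mul_inv_iff hr]

theorem eFrechetSub_subset_of_le {g h : X → EReal} {x₀ : X} (hle : ∀ x, g x ≤ h x)
    (heq : g x₀ = h x₀) (ε : ℝ) : eFrechetSub ε g x₀ ⊆ eFrechetSub ε h x₀ := by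
  intro p hp
  simp only [eFrechetSub, Set.mem_ofPred_eq, ← heq] at hp ⊢
  refine hp.trans (liminf_le_liminf (Eventually.of_forall fun x => ?_))
  exact mul_le_mul_of_nonneg_right (EReal.sub_le_sub (EReal.sub_le_sub (hle x) le_rfl) le_rfl)
    (EReal.coe_nonneg.2 (inv_nonneg.2 (norm_nonneg _)))

theorem apply_le_of_mem_eFrechetSub {g : X → EReal} {x₀ v : X} {a c : ℝ} {p : X →L[ℝ] ℝ}
    (hp : p ∈ eFrechetSub 0 g x₀) (ha : g x₀ = a)
    (hg : ∀ t : ℝ, 0 < t → g (x₀ + t • v) ≤ ((a + t * c : ℝ) : EReal)) : p v ≤ c := by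
  rw [mem_eFrechetSub_zero_iff ha] at hp
  refine le_of_forall_pos_le_add fun ε hε => ?_
  have hline : Tendsto (fun t : ℝ => x₀ + t • v) (𝓝[>] 0) (𝓝 x₀) := by
    refine tendsto_nhdsWithin_of_tendsto_nhds ?_
    exact (by fun_prop : Continuous fun t : ℝ => x₀ + t • v).tendsto' 0 x₀ (by simp)
  have hε' : 0 < ε / (‖v‖ + 1) := by positivity
  obtain ⟨t, hlow, ht : 0 < t⟩ :=
    ((hline.eventually (hp _ hε')).and self_mem_nhdsWithin).exists
  have hle := EReal.coe_le_coe_iff.1 (hlow.trans (hg t ht))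
  simp only [add_sub_cancel_left, map_smul, smul_eq_mul, norm_smul, Real.norm_of_nonneg ht.le]
    at hle
  have hεv : ε / (‖v‖ + 1) * ‖v‖ ≤ ε := by
    rw [div_mul_eq_mul_div, div_le_iff₀ (by positivity)]
    nlinarith [norm_nonneg v]
  nlinarith

section Gauge

variable {F : Set X}

theorem le_gauge'_of_smul_le {φ : X → ℝ} (hφ : ∀ t : ℝ, 0 ≤ t → ∀ u ∈ F, φ (t • u) ≤ t)
    (x : X) : (φ x : EReal) ≤ gauge' F x :=
  le_sInf fun _ ⟨t, ht, ⟨u, hu, hx⟩, hr⟩ => hr ▸ hx ▸ EReal.coe_le_coe_iff.2 (hφ t ht u hu)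

theorem gauge'_nonneg (x : X) : 0 ≤ gauge' F x := by
  simpa using le_gauge'_of_smul_le (F := F) (φ := 0) (fun t ht _ _ => ht) x

theorem gauge'_smul_le {t : ℝ} (ht : 0 ≤ t) {u : X} (hu : u ∈ F) : gauge' F (t • u) ≤ t :=
  sInf_le ⟨t, ht, ⟨u, hu, rfl⟩, rfl⟩

theorem gauge'_zero (hne : F.Nonempty) : gauge' F 0 = 0 :=
  le_antisymm (by simpa using gauge'_smul_le le_rfl hne.some_mem) (gauge'_nonneg 0)

theorem neg_apply_le_gauge' {p : X →L[ℝ] ℝ} (hp : ∀ u ∈ F, -p u ≤ 1) (x : X) :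
    ((-p x : ℝ) : EReal) ≤ gauge' F x :=
  le_gauge'_of_smul_le (φ := fun x => -p x) (fun t ht u hu => by
    simpa [map_smul] using mul_le_mul_of_nonneg_left (hp u hu) ht) x

theorem mul_norm_le_gauge' {k : ℝ} (hk : ∀ u ∈ F, k * ‖u‖ ≤ 1) (x : X) :
    ((k * ‖x‖ : ℝ) : EReal) ≤ gauge' F x :=
  le_gauge'_of_smul_le (φ := fun x => k * ‖x‖) (fun t ht u hu => by
    simpa [norm_smul, Real.norm_of_nonneg ht, mul_left_comm k t]
      using mul_le_mul_of_nonneg_left (hk u hu) ht) x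

end Gauge

theorem mem_eFrechetSub_infConv_gauge' {F : Set X} {f : X → EReal} {x₀ : X} {a ℓ k : ℝ}
    {p : X →L[ℝ] ℝ} (hk0 : 0 ≤ k) (hk : ∀ u ∈ F, k * ‖u‖ ≤ 1) (hℓk : ℓ < k)
    (hp : ∀ u ∈ F, -p u ≤ 1) (hlow : ∀ y, ((a - ℓ * ‖y - x₀‖ : ℝ) : EReal) ≤ f y)
    (ha : f x₀ = a) (hT : infConv (gauge' F) f x₀ = a) (hpf : p ∈ eFrechetSub 0 f x₀) :
    p ∈ eFrechetSub 0 (infConv (gauge' F) f) x₀ := by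
  rw [mem_eFrechetSub_zero_iff ha] at hpf
  rw [mem_eFrechetSub_zero_iff hT]
  intro ε hε
  -- for `‖y - x₀‖ > C * ‖x - x₀‖`, `k ‖y - x‖ + a - ℓ ‖y - x₀‖` already exceeds `a + p (x - x₀)`
  set C := (k + ‖p‖) / (k - ℓ)
  have hC : 0 ≤ C := div_nonneg (by positivity) (sub_pos.2 hℓk).le
  set ε' := ε / (C + 1)
  obtain ⟨δ, hδ, hnear⟩ := Metric.eventually_nhds_iff.1 (hpf ε' (by positivity))
  have hsmall : ∀ᶠ x in 𝓝 x₀, C * ‖x - x₀‖ < δ :=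
    ((by fun_prop : Continuous fun x => C * ‖x - x₀‖).tendsto' x₀ 0 (by simp)).eventually
      (gt_mem_nhds hδ)
  filter_upwards [hsmall] with x hx
  refine le_infConv fun y => ?_
  rcases le_or_gt ‖y - x₀‖ (C * ‖x - x₀‖) with hy | hy
  · have hfy := hnear (by rw [dist_eq_norm]; exact hy.trans_lt hx)
    refine le_trans ?_ (add_le_add (neg_apply_le_gauge' hp (y - x)) hfy)
    rw [← EReal.coe_add, EReal.coe_le_coe_iff]
    have hsplit : p (x - x₀) = -p (y - x) + p (y - x₀) := by simp only [map_sub]; ring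
    have hε' : ε' * ‖y - x₀‖ ≤ ε * ‖x - x₀‖ := calc
      ε' * ‖y - x₀‖ ≤ ε' * (C * ‖x - x₀‖) := by gcongr
      _ ≤ ε' * (C + 1) * ‖x - x₀‖ := by
        nlinarith [mul_nonneg (by positivity : 0 ≤ ε') (norm_nonneg (x - x₀))]
      _ = ε * ‖x - x₀‖ := by rw [div_mul_cancel₀ ε (by positivity)]
    linarith
  · refine le_trans ?_ (add_le_add (mul_norm_le_gauge' hk (y - x)) (hlow y))
    rw [← EReal.coe_add, EReal.coe_le_coe_iff]
    have htri := mul_le_mul_of_nonneg_left (norm_sub_le_norm_sub_add_norm_sub y x x₀) hk0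
    have hpx : p (x - x₀) ≤ ‖p‖ * ‖x - x₀‖ := (le_abs_self _).trans (p.le_opNorm _)
    have hfar : (k + ‖p‖) * ‖x - x₀‖ ≤ (k - ℓ) * ‖y - x₀‖ := calc
      (k + ‖p‖) * ‖x - x₀‖ = (k - ℓ) * (C * ‖x - x₀‖) := by
        rw [← mul_assoc, mul_div_cancel₀ _ (sub_pos.2 hℓk).ne']
      _ ≤ (k - ℓ) * ‖y - x₀‖ := by gcongr
    nlinarith [norm_nonneg (x - x₀)]

theorem stmt11_general (F : Set X) (hne : F.Nonempty)
    (hbd : Bornology.IsBounded F)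
    (f : X → EReal) (hfbot : ∀ x, f x ≠ ⊥)
    (x₀ : X) (ℓ : ℝ) (hℓm : ℓ < (sSup ((fun u => ‖u‖) '' F))⁻¹)
    (hlip : ∀ x : X, f x ≠ ⊤ → |(f x).toReal - (f x₀).toReal| ≤ ℓ * ‖x - x₀‖)
    (hdom : infConv (gauge' F) f x₀ ≠ ⊤) (hS : infConv (gauge' F) f x₀ = f x₀) :
    eFrechetSub 0 (infConv (gauge' F) f) x₀
      = eFrechetSub 0 f x₀ ∩ {p : X →L[ℝ] ℝ | ∀ u ∈ F, -p u ≤ 1} := by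
  obtain ⟨a, ha⟩ : ∃ a : ℝ, f x₀ = a :=
    ⟨(f x₀).toReal, (EReal.coe_toReal (hS ▸ hdom) (hfbot x₀)).symm⟩
  ext p
  constructor
  · intro hp
    refine ⟨eFrechetSub_subset_of_le (infConv_le_self (gauge'_zero hne) f) hS 0 hp,
      fun u hu => ?_⟩
    have hdir : p (-u) ≤ 1 := apply_le_of_mem_eFrechetSub hp (hS.trans ha) fun t ht => by
      refine (infConv_le _ f _ x₀).trans ?_
      rw [ha, sub_add_cancel_left, smul_neg, neg_neg, mul_one, EReal.coe_add, add_comm (a : EReal)]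
      exact add_le_add (gauge'_smul_le ht.le hu) le_rfl
    simpa using hdir
  · rintro ⟨hpf, hpF⟩
    exact mem_eFrechetSub_infConv_gauge' (inv_nonneg.2 (sSup_image_norm_nonneg F))
      (fun u hu => inv_sSup_norm_mul_norm_le_one hbd hu) hℓm hpF
      (coe_sub_le_of_center_lipschitz hfbot ha hlip) ha (hS.trans ha) hpf

theorem stmt11 (F : Set X) (hne : F.Nonempty) (hcl : IsClosed F)
    (hbd : Bornology.IsBounded F) (hconv : Convex ℝ F) (hnz : F ≠ {0})
    (f : X → EReal) (hfbot : ∀ x, f x ≠ ⊥)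
    (x₀ : X) (ℓ : ℝ) (hℓ0 : 0 ≤ ℓ) (hℓm : ℓ < (sSup ((fun u => ‖u‖) '' F))⁻¹)
    (hlip : ∀ x : X, f x ≠ ⊤ → |(f x).toReal - (f x₀).toReal| ≤ ℓ * ‖x - x₀‖)
    (hdom : infConv (gauge' F) f x₀ ≠ ⊤) (hS : infConv (gauge' F) f x₀ = f x₀) :
    eFrechetSub 0 (infConv (gauge' F) f) x₀
      = eFrechetSub 0 f x₀ ∩ {p : X →L[ℝ] ℝ | ∀ u ∈ F, -p u ≤ 1} :=
  stmt11_general F hne hbd f hfbot x₀ ℓ hℓm hlip hdom hS
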